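/- Suppose $\Gamma$ satisfies the Gaussian upper bound $0 < \Gamma(x,t;\xi,\tau) \leq C_1 (t-\tau)^{-n/2} e^{-|x-\xi|^2/(C_1(t-\tau))}$ for $t > \tau$. Then there exist constants $C \geq 1$ and $0 < \delta_1 < 1$, depending only on $C_1$ and $n$, such that for every $x_0 \in \mathbb{R}^n$, $t_0 > \tau$, and $\xi \in \mathbb{R}^n$, setting $\rho = \delta_1 [|x_0 - \xi|^2 + (t_0 - \tau)]^{1/2}$, one has $$\int_{t_0 - \rho^2}^{t_0} \int_{B_\rho(x_0)} |\Gamma(x, t; \xi, \tau)|^2 \, dx \, dt \leq C \frac{\rho^n}{(t_0 - \tau)^{n-1}} e^{-\frac{|x_0 - \xi|^2}{C(t_0 - \tau)}}.$$ -/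

import Mathlib

/-!
Put `R = ‖x₀ - ξ‖`, `D = t₀ - τ` and `δ₁ = 1/2`, so that `ρ² = (R² + D)/4`. On the cylinder,
`Γ² ≤ K D⁻ⁿ exp (-R² / (32 C₁ D))`. If `R² ≤ D`, every time in the cylinder has `t - τ ≥ D/2`,
so the singular factor `(t - τ)⁻ⁿ` costs only `2ⁿ D⁻ⁿ`. If `R² ≥ D`, the ball stays at distance
`≥ R/4` from `ξ`: half of the Gaussian decay absorbs `(t - τ)⁻ⁿ` through `s⁻ⁿ e^{-b/s} ≤ n!/bⁿ`
and the other half gives the exponential factor. Integrating over the cylinder, of measure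
`≍ ρⁿ⁺²`, leaves the polynomial factor `ρ²/D = (1 + R²/D)/4`, which is absorbed by halving the
exponent once more.
-/

open Real MeasureTheory Metric Set
open scoped Nat

lemma mul_exp_neg_div_le (x : ℝ) {c : ℝ} (hc : 0 < c) : x * exp (-(x / c)) ≤ c := by
  have hx : x ≤ c * exp (x / c) := by
    rw [← div_le_iff₀' hc]
    linarith [add_one_le_exp (x / c)]
  calc x * exp (-(x / c)) ≤ c * exp (x / c) * exp (-(x / c)) := by gcongr
    _ = c := by rw [mul_assoc, ← exp_add, add_neg_cancel, exp_zero, mul_one]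

lemma add_mul_exp_neg_div_le {y D c : ℝ} (hy : 0 ≤ y) (hD : 0 < D) (hc : 0 < c) :
    (y + D) * exp (-(y / (c * D))) ≤ (2 * c + 1) * D * exp (-(y / (2 * c * D))) := by
  set u := y / D with hu
  have hsplit : exp (-(y / (c * D))) = exp (-(u / (2 * c))) * exp (-(y / (2 * c * D))) := by
    rw [← exp_add, hu]; congr 1; field_simp; ring
  have hbound : (u + 1) * exp (-(u / (2 * c))) ≤ 2 * c + 1 := by
    have h1 := mul_exp_neg_div_le u (by positivity : 0 < 2 * c)
    have h2 : exp (-(u / (2 * c))) ≤ 1 := exp_le_one_iff.mpr (by simp only [neg_nonpos]; positivity)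
    linarith [add_mul u 1 (exp (-(u / (2 * c))))]
  calc (y + D) * exp (-(y / (c * D)))
      = D * ((u + 1) * exp (-(u / (2 * c)))) * exp (-(y / (2 * c * D))) := by
        rw [hsplit, hu]; field_simp
    _ ≤ D * (2 * c + 1) * exp (-(y / (2 * c * D))) := by gcongr
    _ = (2 * c + 1) * D * exp (-(y / (2 * c * D))) := by ring

lemma inv_pow_mul_exp_neg_div_le (n : ℕ) {b s : ℝ} (hb : 0 < b) (hs : 0 < s) :
    (s ^ n)⁻¹ * exp (-(b / s)) ≤ n ! / b ^ n := by
  have h := Real.pow_div_factorial_le_exp (b / s) (div_pos hb hs).le n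
  rw [div_pow, div_div, div_le_iff₀ (by positivity)] at h
  rw [exp_neg, ← mul_inv, ← inv_div (b ^ n)]
  refine inv_anti₀ (by positivity) ?_
  rw [div_le_iff₀ (by positivity)]
  linarith

lemma sq_le_of_le_gaussian {γ C1 s r : ℝ} (n : ℕ) (hC1 : 0 < C1) (hs : 0 < s) (hγ : 0 ≤ γ)
    (h : γ ≤ C1 * s ^ (-(n : ℝ) / 2) * exp (-r ^ 2 / (C1 * s))) :
    γ ^ 2 ≤ C1 ^ 2 * (s ^ n)⁻¹ * exp (-(r ^ 2 / (C1 * s))) := by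
  have hpow : (s ^ (-(n : ℝ) / 2)) ^ 2 = (s ^ n)⁻¹ := by
    rw [← rpow_natCast _ 2, ← rpow_mul hs.le, ← rpow_natCast, ← rpow_neg hs.le]
    norm_num
  have hexp : exp (-r ^ 2 / (C1 * s)) ^ 2 ≤ exp (-(r ^ 2 / (C1 * s))) := by
    rw [← exp_nat_mul, exp_le_exp, neg_div]
    have : 0 ≤ r ^ 2 / (C1 * s) := by positivity
    push_cast
    linarith
  calc γ ^ 2 ≤ (C1 * s ^ (-(n : ℝ) / 2) * exp (-r ^ 2 / (C1 * s))) ^ 2 := by gcongr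
    _ = C1 ^ 2 * (s ^ n)⁻¹ * exp (-r ^ 2 / (C1 * s)) ^ 2 := by rw [mul_pow, mul_pow, hpow]
    _ ≤ C1 ^ 2 * (s ^ n)⁻¹ * exp (-(r ^ 2 / (C1 * s))) := by gcongr

section PointwiseBound

variable {n : ℕ} {C1 s D R r : ℝ}

lemma gaussian_sq_le_of_near (hC1 : 1 ≤ C1) (hD : 0 < D) (hDs : D ≤ 2 * s) (hRD : R ^ 2 ≤ D) :
    C1 ^ 2 * (s ^ n)⁻¹ * exp (-(r ^ 2 / (C1 * s))) ≤
      exp 1 * C1 ^ 2 * n ! * (32 * C1) ^ n * (D ^ n)⁻¹ * exp (-(R ^ 2 / (32 * C1 * D))) := by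
  have hC1' : 0 < C1 := by linarith
  have hs : 0 < s := by linarith
  have htime : (s ^ n)⁻¹ ≤ 2 ^ n * (D ^ n)⁻¹ :=
    calc (s ^ n)⁻¹ ≤ ((D / 2) ^ n)⁻¹ := by gcongr; linarith
      _ = 2 ^ n * (D ^ n)⁻¹ := by rw [div_pow, inv_div, div_eq_mul_inv]
  have hconst : (2 : ℝ) ^ n ≤ n ! * (32 * C1) ^ n :=
    calc (2 : ℝ) ^ n ≤ 1 * (32 * C1) ^ n := by rw [one_mul]; gcongr; linarith
      _ ≤ n ! * (32 * C1) ^ n := by gcongr; exact_mod_cast n.factorial_pos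
  have hspace : exp (-(r ^ 2 / (C1 * s))) ≤ 1 :=
    exp_le_one_iff.mpr (by simp only [neg_nonpos]; positivity)
  have hone : 1 ≤ exp 1 * exp (-(R ^ 2 / (32 * C1 * D))) := by
    have : R ^ 2 / (32 * C1 * D) ≤ 1 := by rw [div_le_one (by positivity)]; nlinarith
    rw [← exp_add, one_le_exp_iff]
    linarith
  calc C1 ^ 2 * (s ^ n)⁻¹ * exp (-(r ^ 2 / (C1 * s)))
      ≤ C1 ^ 2 * (2 ^ n * (D ^ n)⁻¹) * 1 := by gcongr
    _ ≤ C1 ^ 2 * (n ! * (32 * C1) ^ n * (D ^ n)⁻¹) * (exp 1 * exp (-(R ^ 2 / (32 * C1 * D)))) := by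
        gcongr
    _ = _ := by ring

lemma gaussian_sq_le_of_far (hC1 : 0 < C1) (hs : 0 < s) (hsD : s ≤ D) (hDR : D ≤ R ^ 2)
    (hR : 0 ≤ R) (hRr : R ≤ 4 * r) :
    C1 ^ 2 * (s ^ n)⁻¹ * exp (-(r ^ 2 / (C1 * s))) ≤
      exp 1 * C1 ^ 2 * n ! * (32 * C1) ^ n * (D ^ n)⁻¹ * exp (-(R ^ 2 / (32 * C1 * D))) := by
  have hD : 0 < D := hs.trans_le hsD
  set b := R ^ 2 / (32 * C1) with hb_def
  have hb : 0 < b := div_pos (hs.trans_le (hsD.trans hDR)) (by positivity)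
  have hexp : exp (-(r ^ 2 / (C1 * s))) ≤ exp (-(b / s)) * exp (-(b / D)) := by
    rw [← exp_add, exp_le_exp]
    have h1 : b / D ≤ b / s := by gcongr
    have h2 : 2 * (b / s) ≤ r ^ 2 / (C1 * s) := by
      have : 2 * (b / s) = R ^ 2 / 16 / (C1 * s) := by rw [hb_def]; field_simp; ring
      rw [this]
      gcongr
      nlinarith
    linarith
  have hbn : (n ! : ℝ) / b ^ n ≤ n ! * (32 * C1) ^ n * (D ^ n)⁻¹ := by
    rw [hb_def, div_pow, div_div_eq_mul_div, div_eq_mul_inv]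
    gcongr
  calc C1 ^ 2 * (s ^ n)⁻¹ * exp (-(r ^ 2 / (C1 * s)))
      ≤ C1 ^ 2 * (s ^ n)⁻¹ * (exp (-(b / s)) * exp (-(b / D))) := by gcongr
    _ = C1 ^ 2 * ((s ^ n)⁻¹ * exp (-(b / s))) * exp (-(b / D)) := by ring
    _ ≤ C1 ^ 2 * (n ! / b ^ n) * exp (-(b / D)) := by
        gcongr; exact inv_pow_mul_exp_neg_div_le n hb hs
    _ ≤ C1 ^ 2 * (n ! * (32 * C1) ^ n * (D ^ n)⁻¹) * exp (-(b / D)) := by gcongr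
    _ ≤ C1 ^ 2 * (n ! * (32 * C1) ^ n * (D ^ n)⁻¹) * (exp 1 * exp (-(b / D))) := by
        gcongr ?_ * ?_
        exact le_mul_of_one_le_left (exp_pos _).le (one_le_exp zero_le_one)
    _ = _ := by rw [hb_def, div_div]; ring

end PointwiseBound

lemma near_or_far_of_mem_cylinder {E : Type*} [SeminormedAddCommGroup E] {x x0 ξ : E}
    {t t0 τ ρ : ℝ} (hρ : ρ ^ 2 = (‖x0 - ξ‖ ^ 2 + (t0 - τ)) / 4) (hx : x ∈ ball x0 ρ)
    (ht : t ∈ Ioo (t0 - ρ ^ 2) t0) :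
    (‖x0 - ξ‖ ^ 2 ≤ t0 - τ ∧ t0 - τ ≤ 2 * (t - τ)) ∨
      (t0 - τ ≤ ‖x0 - ξ‖ ^ 2 ∧ ‖x0 - ξ‖ ≤ 4 * ‖x - ξ‖) := by
  rcases le_total (‖x0 - ξ‖ ^ 2) (t0 - τ) with hnear | hfar
  · exact .inl ⟨hnear, by linarith [ht.1]⟩
  · refine .inr ⟨hfar, ?_⟩
    have hxx0 : ‖x - x0‖ < ρ := mem_ball_iff_norm.mp hx
    have hρR : ρ ≤ 3 / 4 * ‖x0 - ξ‖ := by nlinarith [norm_nonneg (x - x0), norm_nonneg (x0 - ξ)]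
    have htri : ‖x0 - ξ‖ ≤ ‖x - x0‖ + ‖x - ξ‖ := by
      simpa [norm_sub_rev x x0] using norm_sub_le_norm_sub_add_norm_sub x0 x ξ
    linarith

lemma sq_le_of_mem_cylinder {E : Type*} [SeminormedAddCommGroup E] {n : ℕ} {C1 γ : ℝ}
    (hC1 : 1 ≤ C1) {x x0 ξ : E} {t t0 τ ρ : ℝ}
    (hγ : τ < t → 0 < γ ∧ γ ≤ C1 * (t - τ) ^ (-(n : ℝ) / 2) * exp (-‖x - ξ‖ ^ 2 / (C1 * (t - τ))))
    (hγ0 : t ≤ τ → γ = 0) (hτ : τ < t0) (hρ : ρ ^ 2 = (‖x0 - ξ‖ ^ 2 + (t0 - τ)) / 4)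
    (hx : x ∈ ball x0 ρ) (ht : t ∈ Ioo (t0 - ρ ^ 2) t0) :
    γ ^ 2 ≤ exp 1 * C1 ^ 2 * n ! * (32 * C1) ^ n * ((t0 - τ) ^ n)⁻¹ *
      exp (-(‖x0 - ξ‖ ^ 2 / (32 * C1 * (t0 - τ)))) := by
  have hC1' : 0 < C1 := by linarith
  have hD : 0 < t0 - τ := sub_pos.mpr hτ
  rcases le_or_gt t τ with hbefore | hafter
  · rw [hγ0 hbefore, zero_pow two_ne_zero]; positivity
  have hs : 0 < t - τ := sub_pos.mpr hafter
  obtain ⟨hγpos, hγle⟩ := hγ hafter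
  refine (sq_le_of_le_gaussian n hC1' hs hγpos.le hγle).trans ?_
  rcases near_or_far_of_mem_cylinder hρ hx ht with ⟨hRD, hDs⟩ | ⟨hDR, hRr⟩
  · exact gaussian_sq_le_of_near hC1 hD hDs hRD
  · exact gaussian_sq_le_of_far hC1' hs (by linarith [ht.2]) hDR (norm_nonneg _) hRr

lemma setIntegral_setIntegral_le_of_abs_le {α β : Type*} [MeasurableSpace α] [MeasurableSpace β]
    {μ : Measure α} {ν : Measure β} {s : Set α} {T : Set β} (hs : μ s < ⊤) (hT : ν T < ⊤)
    {f : α → β → ℝ} {M : ℝ} (hf : ∀ t ∈ T, ∀ x ∈ s, |f x t| ≤ M) :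
    ∫ t in T, ∫ x in s, f x t ∂μ ∂ν ≤ M * μ.real s * ν.real T :=
  (Real.le_norm_self _).trans <| norm_setIntegral_le_of_norm_le_const hT fun t ht =>
    norm_setIntegral_le_of_norm_le_const hs (hf t ht)

lemma MeasureTheory.Measure.addHaar_real_ball_of_pos {E : Type*} [NormedAddCommGroup E]
    [NormedSpace ℝ E] [MeasurableSpace E] [BorelSpace E] [FiniteDimensional ℝ E] (μ : Measure E)
    [μ.IsAddHaarMeasure] (x : E) {r : ℝ} (hr : 0 < r) :
    μ.real (ball x r) = r ^ Module.finrank ℝ E * μ.real (ball (0 : E) 1) := by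
  rw [measureReal_def, Measure.addHaar_ball_of_pos μ x hr, ENNReal.toReal_mul,
    ENNReal.toReal_ofReal (by positivity), measureReal_def]

/-- `L²` bound on a parabolic cylinder for a kernel satisfying a Gaussian upper bound. -/
theorem stmt4 (n : ℕ) (C1 : ℝ) (hC1 : 1 ≤ C1) :
    ∃ C : ℝ, 1 ≤ C ∧ ∃ δ1 : ℝ, 0 < δ1 ∧ δ1 < 1 ∧
      ∀ Γ : EuclideanSpace ℝ (Fin n) → ℝ → EuclideanSpace ℝ (Fin n) → ℝ → ℝ,
        (∀ x t ξ τ, τ < t → 0 < Γ x t ξ τ ∧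
            Γ x t ξ τ ≤ C1 * (t - τ) ^ (-(n : ℝ) / 2) *
              Real.exp (-‖x - ξ‖ ^ 2 / (C1 * (t - τ)))) →
        (∀ x t ξ τ, t ≤ τ → Γ x t ξ τ = 0) →
        ∀ (x0 ξ : EuclideanSpace ℝ (Fin n)) (t0 τ : ℝ), τ < t0 →
          (∫ t in Set.Ioo (t0 - (δ1 * Real.sqrt (‖x0 - ξ‖ ^ 2 + (t0 - τ))) ^ 2) t0,
              ∫ x in Metric.ball x0 (δ1 * Real.sqrt (‖x0 - ξ‖ ^ 2 + (t0 - τ))),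
                (Γ x t ξ τ) ^ 2) ≤
            C * (δ1 * Real.sqrt (‖x0 - ξ‖ ^ 2 + (t0 - τ))) ^ (n : ℝ) /
                (t0 - τ) ^ ((n : ℝ) - 1) *
              Real.exp (-‖x0 - ξ‖ ^ 2 / (C * (t0 - τ))) := by
  set v := volume.real (ball (0 : EuclideanSpace ℝ (Fin n)) 1)
  set c := 32 * C1
  have hc0 : 0 < c := by positivity
  set K := exp 1 * C1 ^ 2 * n ! * c ^ n
  set C := 2 * c + K * v * (2 * c + 1) / 4
  have hcC : 2 * c ≤ C := le_add_of_nonneg_right (by positivity)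
  refine ⟨C, by linarith, 1 / 2, by norm_num, by norm_num, ?_⟩
  intro Γ hΓ hΓ0 x0 ξ t0 τ hτ
  set R := ‖x0 - ξ‖
  set D := t0 - τ
  set ρ := 1 / 2 * sqrt (R ^ 2 + D)
  have hD : 0 < D := sub_pos.mpr hτ
  have hρ0 : 0 < ρ := by positivity
  have hρ : ρ ^ 2 = (R ^ 2 + D) / 4 := by rw [mul_pow, sq_sqrt (by positivity)]; ring
  have hpoint : ∀ t ∈ Ioo (t0 - ρ ^ 2) t0, ∀ x ∈ ball x0 ρ,
      |Γ x t ξ τ ^ 2| ≤ K * (D ^ n)⁻¹ * exp (-(R ^ 2 / (c * D))) := fun t ht x hx => by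
    rw [abs_of_nonneg (sq_nonneg _)]
    exact sq_le_of_mem_cylinder hC1 (hΓ x t ξ τ) (hΓ0 x t ξ τ) hτ hρ hx ht
  rw [rpow_natCast, rpow_sub hD, rpow_one, rpow_natCast, neg_div]
  calc _ ≤ K * (D ^ n)⁻¹ * exp (-(R ^ 2 / (c * D))) * volume.real (ball x0 ρ) *
        volume.real (Ioo (t0 - ρ ^ 2) t0) :=
        setIntegral_setIntegral_le_of_abs_le measure_ball_lt_top measure_Ioo_lt_top hpoint
    _ = K * v / 4 * ρ ^ n * (D ^ n)⁻¹ * ((R ^ 2 + D) * exp (-(R ^ 2 / (c * D)))) := by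
        rw [Measure.addHaar_real_ball_of_pos volume x0 hρ0, finrank_euclideanSpace_fin,
          volume_real_Ioo_of_le (by linarith [sq_nonneg ρ]), sub_sub_cancel, hρ]
        ring
    _ ≤ K * v / 4 * ρ ^ n * (D ^ n)⁻¹ *
        ((2 * c + 1) * D * exp (-(R ^ 2 / (2 * c * D)))) :=
        mul_le_mul_of_nonneg_left (add_mul_exp_neg_div_le (sq_nonneg R) hD hc0) (by positivity)
    _ = K * v * (2 * c + 1) / 4 * (ρ ^ n / (D ^ n / D)) *
        exp (-(R ^ 2 / (2 * c * D))) := by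
        rw [div_div_eq_mul_div, div_eq_mul_inv]
        ring
    _ ≤ C * (ρ ^ n / (D ^ n / D)) * exp (-(R ^ 2 / (C * D))) := by
        gcongr
        exact le_add_of_nonneg_left (by positivity)
    _ = _ := by ring
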